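/- arXiv:2502.19254 — 5 statements merged into one kernel-verified Lean document; each statement's English description precedes it below -/
import Mathlib

section
/- Let n ≥ 1, let Z = X × Y with X a nonempty measurable space and Y a measurable space, let B : Z ↪ Y be a Markov kernel, and let E : Z^{n+1} → [0,∞] be a randomness e-variable. Then the function G defined by G(z_1,…,z_n,z_{n+1}) := e^{-1} ∫_Y [E(z_1,…,z_n,x_{n+1},y) / E^X(z_1,…,z_n,x_{n+1},y)] B(dy | z_{n+1}), where z_{n+1} = (x_{n+1},y_{n+1}) and the ratio 0/0 is set to 0, is a randomness e-variable. -/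
/-!
Since `E / E^X ≤ E^i` pointwise, `∫ G dQ^{n+1}` is at most `e⁻¹ ∫ E^i dμ`, where under `μ`
the training examples are IID `Q` and the last example is independent with law `P`, the law of
`(x_{n+1}, y)` for `z_{n+1} ~ Q` and `y ~ B(· | z_{n+1})`. The symmetrised `E^i` is again a
randomness e-variable, so its integral under `R^{n+1}` is at most 1 for the mixture
`R = P/(n+1) + nQ/(n+1)`. Expanding `R^{n+1}` and keeping only the `n+1` terms with exactly one
factor `P`, each equal to `(n/(n+1))^n/(n+1) ∫ E^i dμ` by symmetry, gives
`(n/(n+1))^n ∫ E^i dμ ≤ 1`, and `(n/(n+1))^n ≥ e⁻¹`.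
-/

open MeasureTheory ProbabilityTheory
open scoped ENNReal NNReal

noncomputable section

/-- `E` is a *randomness e-variable*: a measurable nonnegative function on `Z^{n+1}` whose
integral is at most 1 under every product (IID) probability measure `Q^{n+1}`. -/
def IsRandE {Z : Type*} [MeasurableSpace Z] (n : ℕ) (E : (Fin (n+1) → Z) → ℝ≥0∞) : Prop :=
  Measurable E ∧
    ∀ (Q : Measure Z), IsProbabilityMeasure Q →
      ∫⁻ z, E z ∂(Measure.pi fun _ : Fin (n+1) => Q) ≤ 1

/-- A probability measure on `Z^{n+1}` is *exchangeable* if it is invariant under all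
permutations of the `n+1` coordinates. -/
def IsExchangeable {Z : Type*} [MeasurableSpace Z] (n : ℕ)
    (R : Measure (Fin (n+1) → Z)) : Prop :=
  ∀ π : Equiv.Perm (Fin (n+1)), Measure.map (fun z i => z (π i)) R = R

/-- `E` is an *exchangeability e-variable*: its integral is at most 1 under every
exchangeable probability measure on `Z^{n+1}`. -/
def IsExchE {Z : Type*} [MeasurableSpace Z] (n : ℕ) (E : (Fin (n+1) → Z) → ℝ≥0∞) : Prop :=
  Measurable E ∧
    ∀ (R : Measure (Fin (n+1) → Z)), IsProbabilityMeasure R → IsExchangeable n R →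
      ∫⁻ z, E z ∂(R) ≤ 1

/-- A function on `Z^{n+1}` is *train-invariant* if it is invariant under permutations of the
first `n` (training) examples. -/
def TrainInv {Z α : Type*} (n : ℕ) (E : (Fin (n+1) → Z) → α) : Prop :=
  ∀ (z : Fin (n+1) → Z) (σ : Equiv.Perm (Fin n)),
    E (Fin.snoc (fun i => z (Fin.castSucc (σ i))) (z (Fin.last n))) = E z

/-- `E^i`: the average of `E` over all permutations of the `n+1` examples. -/
def Ei {Z : Type*} (n : ℕ) (E : (Fin (n+1) → Z) → ℝ≥0∞) : (Fin (n+1) → Z) → ℝ≥0∞ :=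
  fun z => (∑ π : Equiv.Perm (Fin (n+1)), E (fun i => z (π i))) / (Nat.factorial (n+1) : ℝ≥0∞)

/-- `E^X := E / E^i`, with the convention `0/0 := 1`. -/
def EX {Z : Type*} (n : ℕ) (E : (Fin (n+1) → Z) → ℝ≥0∞) : (Fin (n+1) → Z) → ℝ≥0∞ :=
  fun z => if E z = 0 ∧ Ei n E z = 0 then 1 else E z / Ei n E z

/-- `E^t`: the average of `E` over all permutations of the `n` training examples. -/
def Et {Z : Type*} (n : ℕ) (E : (Fin (n+1) → Z) → ℝ≥0∞) : (Fin (n+1) → Z) → ℝ≥0∞ :=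
  fun z => (∑ σ : Equiv.Perm (Fin n),
      E (Fin.snoc (fun i => z (Fin.castSucc (σ i))) (z (Fin.last n)))) / (Nat.factorial n : ℝ≥0∞)

/-- Replace the label of the test (last) example by `y`, keeping the training examples and the
test object: this is `(z_1, …, z_n, (x_{n+1}, y))`. -/
def withLabel {X Y : Type*} (n : ℕ) (z : Fin (n+1) → X × Y) (y : Y) : Fin (n+1) → X × Y :=
  Fin.snoc (fun i : Fin n => z (Fin.castSucc i)) ((z (Fin.last n)).1, y)

open Function

namespace MeasureTheory.Measure

variable {ι : Type*} [Fintype ι] {α : ι → Type*} [∀ i, MeasurableSpace (α i)]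

theorem pi_add_eq_sum_piecewise [DecidableEq ι] (μ ν : ∀ i, Measure (α i))
    [∀ i, IsFiniteMeasure (μ i)] [∀ i, IsFiniteMeasure (ν i)] :
    Measure.pi (fun i => μ i + ν i) = ∑ t : Finset ι, Measure.pi (t.piecewise μ ν) := by
  have (t : Finset ι) (i : ι) : IsFiniteMeasure (t.piecewise μ ν i) := by
    unfold Finset.piecewise; split_ifs <;> infer_instance
  refine Measure.pi_eq fun s _ => ?_
  simp only [Measure.finsetSum_apply, Measure.pi_pi, Measure.add_apply, Finset.prod_add]
  refine Finset.sum_congr rfl fun t _ => ?_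
  rw [← Finset.prod_mul_prod_compl t]
  congr 1 <;> refine Finset.prod_congr rfl fun i hi => ?_
  · rw [Finset.piecewise_eq_of_mem _ _ _ hi]
  · rw [Finset.piecewise_eq_of_notMem _ _ _ (Finset.mem_compl.mp hi)]

theorem pi_smul (c : ι → ℝ≥0) (μ : ∀ i, Measure (α i)) [∀ i, IsFiniteMeasure (μ i)] :
    Measure.pi (fun i => c i • μ i) = (∏ i, c i) • Measure.pi μ := by
  refine Measure.pi_eq fun s _ => ?_
  simp only [Measure.pi_pi, Measure.smul_apply, ENNReal.smul_def, smul_eq_mul,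
    ENNReal.ofNNReal_finsetProd, Finset.prod_mul_distrib]

theorem measurePreserving_comp_perm {β : Type*} [MeasurableSpace β] (μ : ι → Measure β)
    [∀ i, SigmaFinite (μ i)] (π : Equiv.Perm ι) :
    MeasurePreserving (fun z : ι → β => z ∘ π) (Measure.pi μ) (Measure.pi fun i => μ (π i)) :=
  measurePreserving_arrowCongr' μ (fun i => μ (π i)) π.symm (MeasurableEquiv.refl β)
    fun i => by rw [Equiv.apply_symm_apply]; exact MeasurePreserving.id (μ i)

end MeasureTheory.Measure

section Snoc

variable {Z : Type*} [MeasurableSpace Z] {n : ℕ}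

theorem MeasurableEquiv.piFinSuccAbove_last_symm_apply (p : Z × (Fin n → Z)) :
    (MeasurableEquiv.piFinSuccAbove (fun _ => Z) (Fin.last n)).symm p = Fin.snoc p.2 p.1 := by
  simp [MeasurableEquiv.piFinSuccAbove, Fin.insertNthEquiv, Fin.insertNth_last']

theorem measurable_snoc :
    Measurable fun p : (Fin n → Z) × Z => (Fin.snoc p.1 p.2 : Fin (n + 1) → Z) := by
  convert (MeasurableEquiv.piFinSuccAbove (fun _ => Z) (Fin.last n)).symm.measurable.comp
    measurable_swap using 1
  funext p
  exact (MeasurableEquiv.piFinSuccAbove_last_symm_apply p.swap).symm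

theorem lintegral_pi_update_last (μ ν : Measure Z) [SigmaFinite μ] [SigmaFinite ν]
    {f : (Fin (n + 1) → Z) → ℝ≥0∞} (hf : Measurable f) :
    ∫⁻ z, f z ∂Measure.pi (update (fun _ => μ) (Fin.last n) ν) =
      ∫⁻ v, ∫⁻ t, f (Fin.snoc t v) ∂Measure.pi (fun _ => μ) ∂ν := by
  have (i : Fin (n + 1)) : SigmaFinite (update (fun _ => μ) (Fin.last n) ν i) := by
    rw [update_apply]; split_ifs <;> infer_instance
  rw [← (measurePreserving_piFinSuccAbove _ (Fin.last n)).symm.lintegral_comp hf]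
  simp only [update_self, Fin.succAbove_last, ne_eq, Fin.castSucc_ne_last, not_false_eq_true,
    update_of_ne, MeasurableEquiv.piFinSuccAbove_last_symm_apply]
  exact lintegral_prod _ (hf.comp (measurable_snoc.comp measurable_swap)).aemeasurable

end Snoc

theorem ENNReal.div_div_self_le (a b : ℝ≥0∞) : a / (a / b) ≤ b := by
  rcases eq_or_ne a 0 with rfl | ha0
  · simp
  rcases eq_or_ne a ⊤ with rfl | hat
  · rcases eq_or_ne b ⊤ with rfl | hbt
    · exact le_top
    · simp [ENNReal.top_div_of_ne_top hbt]
  rw [div_eq_mul_inv, ENNReal.inv_div (Or.inr hat) (Or.inr ha0), mul_comm,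
    ENNReal.div_mul_cancel ha0 hat]

theorem Real.exp_neg_one_le_div_add_one_pow (n : ℕ) : exp (-1) ≤ ((n : ℝ) / (n + 1)) ^ n := by
  rcases n.eq_zero_or_pos with rfl | _
  · simp
  have : (n : ℝ) / (n + 1) = (1 + (n : ℝ)⁻¹)⁻¹ := by field_simp
  rw [this, inv_pow, Real.exp_neg]
  exact inv_anti₀ (by positivity) Real.one_add_inv_pow_le_exp

theorem ENNReal.ofReal_exp_neg_one_le_div_add_one_pow (n : ℕ) :
    ENNReal.ofReal (Real.exp (-1)) ≤ (((n / (n + 1) : ℝ≥0) ^ n : ℝ≥0) : ℝ≥0∞) := by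
  refine ENNReal.ofReal_le_of_le_toReal ?_
  rw [ENNReal.coe_toReal]
  push_cast
  exact Real.exp_neg_one_le_div_add_one_pow n

section Symmetrization

variable {Z : Type*} {n : ℕ} {E : (Fin (n + 1) → Z) → ℝ≥0∞}

theorem Ei_comp_perm (π : Equiv.Perm (Fin (n + 1))) (z : Fin (n + 1) → Z) :
    Ei n E (z ∘ π) = Ei n E z := by
  unfold Ei
  congr 1
  exact Fintype.sum_equiv (Equiv.mulLeft π) _ _ fun _ => rfl

theorem div_EX_le_Ei (z : Fin (n + 1) → Z) : E z / EX n E z ≤ Ei n E z := by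
  unfold EX
  split_ifs with h
  · simp [h.1]
  · exact ENNReal.div_div_self_le _ _

variable [MeasurableSpace Z]

theorem measurable_Ei (hE : Measurable E) : Measurable (Ei n E) :=
  (Finset.measurable_sum _ fun _ _ => hE.comp (by fun_prop)).div_const _

theorem measurable_EX (hE : Measurable E) : Measurable (EX n E) :=
  Measurable.ite ((hE (measurableSet_singleton 0)).inter
    (measurable_Ei hE (measurableSet_singleton 0))) measurable_const (hE.div (measurable_Ei hE))

theorem isRandE_Ei (hE : IsRandE n E) : IsRandE n (Ei n E) := by
  refine ⟨measurable_Ei hE.1, fun Q hQ => ?_⟩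
  have hperm (π : Equiv.Perm (Fin (n + 1))) :
      ∫⁻ z, E (z ∘ π) ∂Measure.pi (fun _ => Q) ≤ 1 := by
    rw [(Measure.measurePreserving_comp_perm _ π).lintegral_comp hE.1]
    exact hE.2 Q hQ
  calc ∫⁻ z, Ei n E z ∂Measure.pi (fun _ => Q)
      = (∑ π : Equiv.Perm (Fin (n + 1)), ∫⁻ z, E (z ∘ π) ∂Measure.pi (fun _ => Q)) /
          (n + 1).factorial := by
        simp only [Ei, div_eq_mul_inv]
        rw [lintegral_mul_const' _ _ (by simp [Nat.factorial_ne_zero])]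
        exact congrArg (· * _) (lintegral_finsetSum _ fun π _ => hE.1.comp (by fun_prop))
    _ ≤ (∑ _π : Equiv.Perm (Fin (n + 1)), 1) / (n + 1).factorial := by
        gcongr with π
        exact hperm π
    _ ≤ 1 := by simp [Fintype.card_perm]

end Symmetrization

section Mixture

variable {Z : Type*} [MeasurableSpace Z] {n : ℕ} {f : (Fin (n + 1) → Z) → ℝ≥0∞}

theorem lintegral_pi_update_eq_of_comp_perm (hf : Measurable f)
    (hsym : ∀ (π : Equiv.Perm (Fin (n + 1))) z, f (z ∘ π) = f z)
    (Q P : Measure Z) [IsFiniteMeasure Q] [IsFiniteMeasure P] (j k : Fin (n + 1)) :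
    ∫⁻ z, f z ∂Measure.pi (update (fun _ => Q) j P) =
      ∫⁻ z, f z ∂Measure.pi (update (fun _ => Q) k P) := by
  have (i : Fin (n + 1)) : SigmaFinite (update (fun _ => Q) j P i) := by
    rw [update_apply]; split_ifs <;> infer_instance
  have hswap :
      (fun i => update (fun _ => Q) j P (Equiv.swap j k i)) = update (fun _ => Q) k P := by
    funext i
    simp only [update_apply, Equiv.swap_apply_eq_iff, Equiv.swap_apply_left]
  rw [← hswap, ← (Measure.measurePreserving_comp_perm _ (Equiv.swap j k)).lintegral_comp hf]
  simp only [hsym]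

theorem IsRandE.pow_mul_lintegral_pi_update_le (hf : IsRandE n f)
    (hsym : ∀ (π : Equiv.Perm (Fin (n + 1))) z, f (z ∘ π) = f z)
    (Q P : Measure Z) [IsProbabilityMeasure Q] [IsProbabilityMeasure P] (j : Fin (n + 1)) :
    (((n / (n + 1) : ℝ≥0) ^ n : ℝ≥0) : ℝ≥0∞) *
      ∫⁻ z, f z ∂Measure.pi (update (fun _ => Q) j P) ≤ 1 := by
  set b : ℝ≥0 := (n + 1)⁻¹
  set a : ℝ≥0 := n / (n + 1)
  set μ : Finset (Fin (n + 1)) → Measure (Fin (n + 1) → Z) :=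
    fun t => Measure.pi (t.piecewise (fun _ => b • P) (fun _ => a • Q))
  have hb : (n + 1 : ℝ≥0) * b = 1 := mul_inv_cancel₀ (by positivity)
  have hab : b + a = 1 := by
    simp only [a, b]
    field_simp
    exact add_comm 1 _
  have hmix : ∑ t, ∫⁻ z, f z ∂μ t ≤ 1 := by
    have := hf.2 (b • P + a • Q) ⟨by simp [← ENNReal.coe_add, hab]⟩
    rwa [Measure.pi_add_eq_sum_piecewise, lintegral_finsetSum_measure] at this
  have hsingle (i : Fin (n + 1)) :
      ∫⁻ z, f z ∂μ {i} = (a ^ n * b : ℝ≥0) * ∫⁻ z, f z ∂Measure.pi (update (fun _ => Q) j P) := by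
    have hfam : ({i} : Finset _).piecewise (fun _ => b • P) (fun _ => a • Q) =
        fun k => update (fun _ => a) i b k • update (fun _ => Q) i P k := by
      funext k
      rw [Finset.piecewise_singleton, update_apply, update_apply, update_apply]
      split_ifs <;> rfl
    have (k : Fin (n + 1)) : IsFiniteMeasure (update (fun _ => Q) i P k) := by
      rw [update_apply]; split_ifs <;> infer_instance
    rw [show μ {i} = Measure.pi _ from rfl, hfam, Measure.pi_smul, lintegral_smul_measure,
      lintegral_pi_update_eq_of_comp_perm hf.1 hsym Q P i j,
      Finset.prod_update_of_mem (Finset.mem_univ i), ← Finset.compl_eq_univ_sdiff,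
      Finset.prod_const, Finset.card_compl, Finset.card_singleton, Fintype.card_fin,
      Nat.add_sub_cancel, ENNReal.smul_def, smul_eq_mul, mul_comm b]
  calc (((n / (n + 1) : ℝ≥0) ^ n : ℝ≥0) : ℝ≥0∞) *
        ∫⁻ z, f z ∂Measure.pi (update (fun _ => Q) j P)
      = ∑ i : Fin (n + 1), ∫⁻ z, f z ∂μ {i} := by
        rw [Finset.sum_congr rfl fun i _ => hsingle i, Finset.sum_const, Finset.card_univ,
          Fintype.card_fin, nsmul_eq_mul, ← mul_assoc]
        congr 1
        rw [← ENNReal.coe_natCast, ← ENNReal.coe_mul, mul_left_comm, Nat.cast_succ, hb, mul_one]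
    _ = ∑ t ∈ Finset.univ.map ⟨singleton, Finset.singleton_injective⟩, ∫⁻ z, f z ∂μ t := by
        rw [Finset.sum_map]
        rfl
    _ ≤ 1 := (Finset.sum_le_sum_of_subset (Finset.subset_univ _)).trans hmix

end Mixture

section Relabel

variable {X Y : Type*} {n : ℕ}

theorem withLabel_snoc (t : Fin n → X × Y) (w : X × Y) (y : Y) :
    withLabel n (Fin.snoc t w) y = Fin.snoc t (w.1, y) := by
  simp [withLabel]

variable [MeasurableSpace X] [MeasurableSpace Y]

def relabelMeasure (Q : Measure (X × Y)) (B : Kernel (X × Y) Y) : Measure (X × Y) :=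
  (Q ⊗ₘ B).map fun p => (p.1.1, p.2)

instance (Q : Measure (X × Y)) [IsProbabilityMeasure Q] (B : Kernel (X × Y) Y)
    [IsMarkovKernel B] : IsProbabilityMeasure (relabelMeasure Q B) :=
  Measure.isProbabilityMeasure_map (by fun_prop)

theorem measurable_withLabel :
    Measurable fun p : (Fin (n + 1) → X × Y) × Y => withLabel n p.1 p.2 :=
  measurable_snoc.comp ((by fun_prop : Measurable fun p : (Fin (n + 1) → X × Y) × Y =>
    fun i : Fin n => p.1 i.castSucc).prodMk (by fun_prop))

theorem measurable_lintegral_withLabel (B : Kernel (X × Y) Y) [IsSFiniteKernel B]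
    {g : (Fin (n + 1) → X × Y) → ℝ≥0∞} (hg : Measurable g) :
    Measurable fun z : Fin (n + 1) → X × Y => ∫⁻ y, g (withLabel n z y) ∂B (z (Fin.last n)) :=
  Measurable.lintegral_kernel_prod_right
    (κ := B.comap (fun z : Fin (n + 1) → X × Y => z (Fin.last n)) (measurable_pi_apply _))
    (f := fun z y => g (withLabel n z y)) (hg.comp measurable_withLabel)

theorem lintegral_lintegral_withLabel (Q : Measure (X × Y)) [IsProbabilityMeasure Q]
    (B : Kernel (X × Y) Y) [IsMarkovKernel B] {g : (Fin (n + 1) → X × Y) → ℝ≥0∞}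
    (hg : Measurable g) :
    ∫⁻ z, ∫⁻ y, g (withLabel n z y) ∂B (z (Fin.last n)) ∂Measure.pi (fun _ => Q) =
      ∫⁻ z, g z ∂Measure.pi (update (fun _ => Q) (Fin.last n) (relabelMeasure Q B)) := by
  have hsplit := lintegral_pi_update_last Q Q (measurable_lintegral_withLabel B hg)
  simp only [update_eq_self, withLabel_snoc, Fin.snoc_last] at hsplit
  have hg' : Measurable fun p : (Fin n → X × Y) × (X × Y) => g (Fin.snoc p.1 p.2) :=
    hg.comp measurable_snoc
  rw [hsplit, lintegral_pi_update_last Q _ hg, relabelMeasure,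
    lintegral_map hg'.lintegral_prod_left' (by fun_prop), Measure.lintegral_compProd]
  · refine lintegral_congr fun w => lintegral_lintegral_swap ?_
    exact (hg'.comp (measurable_fst.prodMk (measurable_const.prodMk measurable_snd))).aemeasurable
  · exact hg'.lintegral_prod_left'.comp (by fun_prop)

end Relabel

theorem stmt0_general {X Y : Type*} [MeasurableSpace X] [MeasurableSpace Y]
    (n : ℕ) (B : Kernel (X × Y) Y) [IsMarkovKernel B]
    (E : (Fin (n+1) → X × Y) → ℝ≥0∞) (hE : IsRandE n E) :
    IsRandE n (fun z =>
      ENNReal.ofReal (Real.exp (-1)) *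
        ∫⁻ y, E (withLabel n z y) / EX n E (withLabel n z y) ∂(B (z (Fin.last n)))) := by
  have hG := measurable_lintegral_withLabel B (g := fun w => E w / EX n E w)
    (hE.1.div (measurable_EX hE.1))
  refine ⟨measurable_const.mul hG, fun Q _ => ?_⟩
  dsimp only
  rw [lintegral_const_mul _ hG]
  calc ENNReal.ofReal (Real.exp (-1)) *
        ∫⁻ z, ∫⁻ y, E (withLabel n z y) / EX n E (withLabel n z y)
          ∂B (z (Fin.last n)) ∂Measure.pi (fun _ => Q)
      ≤ (((n / (n + 1) : ℝ≥0) ^ n : ℝ≥0) : ℝ≥0∞) *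
          ∫⁻ z, ∫⁻ y, Ei n E (withLabel n z y) ∂B (z (Fin.last n)) ∂Measure.pi (fun _ => Q) := by
        gcongr ?_ * ?_
        · exact ENNReal.ofReal_exp_neg_one_le_div_add_one_pow n
        · exact lintegral_mono fun z => lintegral_mono fun y => div_EX_le_Ei _
    _ = (((n / (n + 1) : ℝ≥0) ^ n : ℝ≥0) : ℝ≥0∞) *
          ∫⁻ z, Ei n E z ∂Measure.pi (update (fun _ => Q) (Fin.last n) (relabelMeasure Q B)) := by
        rw [lintegral_lintegral_withLabel Q B (measurable_Ei hE.1)]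
    _ ≤ 1 := (isRandE_Ei hE).pow_mul_lintegral_pi_update_le Ei_comp_perm Q _ _

/-- Theorem 1 (Kolmogorov-type result): for any Markov kernel `B : Z ↪ Y` and any randomness
e-variable `E` on `Z^{n+1}` (`Z = X × Y`), the function
`G(z_1,…,z_n,z_{n+1}) := e⁻¹ ∫ (E(z_1,…,z_n,x_{n+1},y) / E^X(z_1,…,z_n,x_{n+1},y)) B(dy|z_{n+1})`
(with `0/0 := 0`, as for `ℝ≥0∞` division) is again a randomness e-variable. -/
theorem stmt0 {X Y : Type*} [MeasurableSpace X] [Nonempty X] [MeasurableSpace Y]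
    (n : ℕ) (hn : 1 ≤ n) (B : Kernel (X × Y) Y) [IsMarkovKernel B]
    (E : (Fin (n+1) → X × Y) → ℝ≥0∞) (hE : IsRandE n E) :
    IsRandE n (fun z =>
      ENNReal.ofReal (Real.exp (-1)) *
        ∫⁻ y, E (withLabel n z y) / EX n E (withLabel n z y) ∂(B (z (Fin.last n)))) :=
  stmt0_general n B E hE

end
end

section
/- The constant e^{-1} in the preceding result is optimal: for every constant c > e^{-1} there exist an integer n ≥ 1, a one-point object space X, the label space Y = {-1,1}, the Markov kernel B with B({-y} | (x,y)) = 1, and a train-invariant randomness e-variable E on (X×Y)^{n+1} such that the function G(z_1,…,z_n,z_{n+1}) := c · E(z_1,…,z_n,x_{n+1},-y_{n+1}) / E^X(z_1,…,z_n,x_{n+1},-y_{n+1}) (with 0/0 := 0 and z_{n+1} = (x_{n+1},y_{n+1})) is not a randomness e-variable, i.e., there is a probability measure Q on X×Y with ∫ G dQ^{n+1} > 1. -/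
/-!
Let `E` be `n e` on the single sequence `(u, …, u, v)` (with `u ≠ v`) and `0` elsewhere.
Under `Q^{n+1}` its integral is at most `n e p^n (1 - p)` with `p = Q {u}`, and
`n p^n (1 - p) ≤ t e^{-t} ≤ e^{-1}` with `t = n (1 - p)`, so `E` is a randomness e-variable.
Only the `n!` permutations fixing the test position leave `(u, …, u, v)` unchanged, so there
`E^i = E / (n + 1)` and `E^X = n + 1`. Under `Q = δ_u`, flipping the test label turns the sample
into `(u, …, u, v)`, so `G` integrates to `c n e / (n + 1)`, which exceeds `1` for large `n`.
-/

open MeasureTheory ProbabilityTheory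
open scoped ENNReal NNReal

noncomputable section

instance : MeasurableSpace ℤˣ := ⊤

open Filter Topology

lemma natCast_mul_pow_mul_one_sub_le_exp_neg_one {p : ℝ} (hp : 0 ≤ p) (n : ℕ) :
    n * p ^ n * (1 - p) ≤ Real.exp (-1) := by
  set t : ℝ := n * (1 - p)
  have hpow : p ^ n ≤ Real.exp (-t) := by
    calc p ^ n ≤ Real.exp (p - 1) ^ n := by
          gcongr; linarith [Real.add_one_le_exp (p - 1)]
      _ = Real.exp (-t) := by rw [← Real.exp_nat_mul]; congr 1; ring
  calc n * p ^ n * (1 - p) = t * p ^ n := by ring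
    _ ≤ Real.exp (t - 1) * Real.exp (-t) :=
        mul_le_mul (by linarith [Real.add_one_le_exp (t - 1)]) hpow (by positivity)
          (Real.exp_nonneg _)
    _ = Real.exp (-1) := by rw [← Real.exp_add]; ring_nf

lemma exists_one_lt_natCast_mul_exp_div_succ {c : ℝ} (hc : (Real.exp 1)⁻¹ < c) :
    ∃ n : ℕ, 1 ≤ n ∧ 1 < c * (n * Real.exp 1) / (n + 1) := by
  have hlim : Tendsto (fun n : ℕ => c * Real.exp 1 * (n / (n + 1))) atTop
      (𝓝 (c * Real.exp 1 * 1)) :=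
    (tendsto_natCast_div_add_atTop (1 : ℝ)).const_mul _
  have hce : 1 < c * Real.exp 1 * 1 := by
    rwa [mul_one, ← inv_lt_iff_one_lt_mul₀ (Real.exp_pos 1)]
  obtain ⟨n, hn, hn₁⟩ :=
    ((hlim.eventually (lt_mem_nhds hce)).and (eventually_ge_atTop 1)).exists
  exact ⟨n, hn₁, by rwa [mul_div_assoc', mul_assoc, mul_comm (Real.exp 1)] at hn⟩

lemma card_perm_fixing_last (n : ℕ) :
    Fintype.card {π : Equiv.Perm (Fin (n + 1)) // π (Fin.last n) = Fin.last n} =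
      n.factorial := by
  calc _ = Fintype.card (Equiv.Perm {i // i ≠ Fin.last n}) :=
        Fintype.card_congr ((Equiv.Perm.subtypeEquivSubtypePerm _).trans
          (Equiv.subtypeEquivRight (by simp))).symm
    _ = n.factorial := by simp [Fintype.card_perm]

section Spike

variable {Z : Type*}

def spike (n : ℕ) (a : ℝ≥0∞) (u v : Z) : (Fin (n + 1) → Z) → ℝ≥0∞ :=
  Set.indicator {Fin.snoc (fun _ => u) v} fun _ => a

lemma spike_apply_self (n : ℕ) (a : ℝ≥0∞) (u v : Z) :
    spike n a u v (Fin.snoc (fun _ => u) v) = a :=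
  Set.indicator_of_mem (Set.mem_singleton _) _

lemma eq_snoc_const_iff {n : ℕ} {u v : Z} {z : Fin (n + 1) → Z} :
    z = Fin.snoc (fun _ => u) v ↔ (∀ i : Fin n, z i.castSucc = u) ∧ z (Fin.last n) = v := by
  simp [funext_iff, Fin.forall_fin_succ']

lemma snoc_const_comp_perm_eq_self_iff {n : ℕ} {u v : Z} (huv : u ≠ v)
    (π : Equiv.Perm (Fin (n + 1))) :
    (fun i => (Fin.snoc (fun _ => u) v : Fin (n + 1) → Z) (π i)) = Fin.snoc (fun _ => u) v ↔
      π (Fin.last n) = Fin.last n := by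
  rw [eq_snoc_const_iff]
  refine ⟨fun ⟨_, hlast⟩ => ?_, fun hlast => ⟨fun i => ?_, by simp [hlast]⟩⟩
  · by_contra h
    obtain ⟨j, hj⟩ := Fin.eq_castSucc_of_ne_last h
    simp [← hj, huv] at hlast
  · have : π i.castSucc ≠ Fin.last n := by
      rw [← hlast, π.injective.ne_iff]; exact Fin.castSucc_ne_last i
    obtain ⟨j, hj⟩ := Fin.eq_castSucc_of_ne_last this
    simp [← hj]

lemma trainInv_spike (n : ℕ) (a : ℝ≥0∞) (u v : Z) : TrainInv n (spike n a u v) := by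
  classical
  intro z σ
  have hσ : (∀ i, z (σ i).castSucc = u) ↔ ∀ i : Fin n, z i.castSucc = u :=
    σ.forall_congr_right (q := fun i => z i.castSucc = u)
  simp only [spike, Set.indicator_apply, Set.mem_singleton_iff, eq_snoc_const_iff,
    Fin.snoc_castSucc, Fin.snoc_last, hσ]

lemma lintegral_spike [MeasurableSpace Z] [MeasurableSingletonClass Z] (n : ℕ) (a : ℝ≥0∞)
    (u v : Z) (Q : Measure Z) [IsFiniteMeasure Q] :
    ∫⁻ z, spike n a u v z ∂(Measure.pi fun _ : Fin (n + 1) => Q) = a * (Q {u} ^ n * Q {v}) := by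
  rw [spike, lintegral_indicator_const (measurableSet_singleton _), Measure.pi_singleton,
    Fin.prod_univ_castSucc]
  simp

lemma ofReal_natCast_mul_exp_mul_pow_mul_one_sub_le_one {p : ℝ≥0∞} (hp : p ≤ 1) (n : ℕ) :
    ENNReal.ofReal (n * Real.exp 1) * (p ^ n * (1 - p)) ≤ 1 := by
  obtain ⟨q, hq₀, rfl⟩ : ∃ q : ℝ, 0 ≤ q ∧ ENNReal.ofReal q = p :=
    ⟨p.toReal, ENNReal.toReal_nonneg,
      ENNReal.ofReal_toReal (ne_top_of_le_ne_top ENNReal.one_ne_top hp)⟩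
  rw [← ENNReal.ofReal_one, ← ENNReal.ofReal_sub _ hq₀, ← ENNReal.ofReal_pow hq₀,
    ← ENNReal.ofReal_mul (by positivity), ← ENNReal.ofReal_mul (by positivity)]
  refine ENNReal.ofReal_le_ofReal ?_
  calc n * Real.exp 1 * (q ^ n * (1 - q)) = Real.exp 1 * (n * q ^ n * (1 - q)) := by ring
    _ ≤ Real.exp 1 * Real.exp (-1) := by
        gcongr; exact natCast_mul_pow_mul_one_sub_le_exp_neg_one hq₀ n
    _ = 1 := by rw [← Real.exp_add]; simp

lemma isRandE_spike [MeasurableSpace Z] [MeasurableSingletonClass Z] (n : ℕ) {u v : Z}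
    (huv : u ≠ v) : IsRandE n (spike n (ENNReal.ofReal (n * Real.exp 1)) u v) := by
  refine ⟨measurable_const.indicator (measurableSet_singleton _), fun Q _ => ?_⟩
  rw [lintegral_spike]
  have hv : Q {v} ≤ 1 - Q {u} := by
    rw [← prob_compl_eq_one_sub (measurableSet_singleton u)]
    exact measure_mono (by simpa using huv)
  calc _ ≤ ENNReal.ofReal (n * Real.exp 1) * (Q {u} ^ n * (1 - Q {u})) := by gcongr
    _ ≤ 1 := ofReal_natCast_mul_exp_mul_pow_mul_one_sub_le_one prob_le_one n

lemma ei_spike (n : ℕ) (a : ℝ≥0∞) {u v : Z} (huv : u ≠ v) :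
    Ei n (spike n a u v) (Fin.snoc (fun _ => u) v) = a / (n + 1) := by
  classical
  have hsum : ∑ π : Equiv.Perm (Fin (n + 1)),
      spike n a u v (fun i => (Fin.snoc (fun _ => u) v : Fin (n + 1) → Z) (π i)) =
        n.factorial * a := by
    simp only [spike, Set.indicator_apply, Set.mem_singleton_iff,
      snoc_const_comp_perm_eq_self_iff huv]
    rw [Finset.sum_ite, Finset.sum_const_zero, add_zero, Finset.sum_const, nsmul_eq_mul,
      ← Fintype.card_subtype, card_perm_fixing_last]
  rw [Ei, hsum, Nat.factorial_succ, Nat.cast_mul, mul_comm ((n + 1 : ℕ) : ℝ≥0∞),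
    ENNReal.mul_div_mul_left _ _ (by simp [n.factorial_ne_zero]) (ENNReal.natCast_ne_top _)]
  norm_cast

lemma ex_spike (n : ℕ) {a : ℝ≥0∞} (ha₀ : a ≠ 0) (ha : a ≠ ⊤) {u v : Z} (huv : u ≠ v) :
    EX n (spike n a u v) (Fin.snoc (fun _ => u) v) = n + 1 := by
  rw [EX, spike_apply_self, if_neg (by simp [ha₀]), ei_spike n a huv,
    ENNReal.div_div_cancel ha₀ ha]

end Spike

instance : MeasurableSingletonClass ℤˣ := ⟨fun _ => trivial⟩

/-- Optimality of the constant `e⁻¹`: for every `c > e⁻¹` there are `n ≥ 1`, a one-point object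
space `X = Unit`, label space `Y = {-1,1}` (realized as `ℤˣ`), the label-flipping Markov kernel,
and a train-invariant randomness e-variable `E` such that
`G(z_1,…,z_{n+1}) := c · E(z_1,…,z_n,x_{n+1},-y_{n+1}) / E^X(z_1,…,z_n,x_{n+1},-y_{n+1})`
is not a randomness e-variable: some power probability measure gives it integral `> 1`. -/
theorem stmt1 (c : ℝ) (hc : (Real.exp 1)⁻¹ < c) :
    ∃ n : ℕ, 1 ≤ n ∧
      ∃ E : (Fin (n+1) → Unit × ℤˣ) → ℝ≥0∞, IsRandE n E ∧ TrainInv n E ∧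
        ∃ Q : Measure (Unit × ℤˣ), IsProbabilityMeasure Q ∧
          1 < ∫⁻ z, ENNReal.ofReal c *
                (E (withLabel n z (-(z (Fin.last n)).2)) /
                  EX n E (withLabel n z (-(z (Fin.last n)).2)))
              ∂(Measure.pi fun _ : Fin (n+1) => Q) := by
  obtain ⟨n, hn, hlt⟩ := exists_one_lt_natCast_mul_exp_div_succ hc
  have hne : (((), 1) : Unit × ℤˣ) ≠ ((), -1) := by decide
  set a := ENNReal.ofReal (n * Real.exp 1)
  have ha₀ : a ≠ 0 := by simp [a, Real.exp_pos 1]; omega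
  refine ⟨n, hn, spike n a ((), 1) ((), -1), isRandE_spike n hne, trainInv_spike n _ _ _,
    Measure.dirac ((), 1), inferInstance, ?_⟩
  set G := fun z : Fin (n + 1) → Unit × ℤˣ => ENNReal.ofReal c *
    (spike n a ((), 1) ((), -1) (withLabel n z (-(z (Fin.last n)).2)) /
      EX n (spike n a ((), 1) ((), -1)) (withLabel n z (-(z (Fin.last n)).2)))
  have hG : G (fun _ => ((), 1)) = ENNReal.ofReal (c * (n * Real.exp 1) / (n + 1)) := by
    simp only [G, withLabel]
    rw [spike_apply_self, ex_spike n ha₀ ENNReal.ofReal_ne_top hne, mul_div_assoc,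
      ENNReal.ofReal_mul' (by positivity), ENNReal.ofReal_div_of_pos (by positivity)]
    norm_cast
  calc 1 < G (fun _ => ((), 1)) := by rw [hG]; exact ENNReal.one_lt_ofReal.mpr hlt
    _ = ∫⁻ z in {fun _ => ((), 1)}, G z ∂(Measure.pi fun _ => Measure.dirac ((), 1)) := by
      simp
    _ ≤ ∫⁻ z, G z ∂(Measure.pi fun _ => Measure.dirac ((), 1)) :=
      setLIntegral_le_lintegral _ _
end
end

section
/- A measurable function E : Z^{n+1} → [0,∞] is an exchangeability e-variable if and only if for every data sequence (z_1,…,z_{n+1}) ∈ Z^{n+1}, (1/(n+1)!) Σ_π E(z_{π(1)},…,z_{π(n+1)}) ≤ 1, where the sum is over all permutations π of {1,…,n+1}. -/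
open MeasureTheory ProbabilityTheory
open scoped ENNReal NNReal

noncomputable section

/-!
Reindexing by a permutation preserves an exchangeable `R`, so `∫ E dR = ∫ Eⁱ dR`, and a pointwise
bound `Eⁱ ≤ 1` gives `∫ E dR ≤ 1`. Conversely, the uniform distribution on the permutations of a
fixed sequence `z` is exchangeable, and integrating `E` against it gives exactly `Eⁱ(z)`.
-/

section Exchangeability

variable {Z : Type*} [MeasurableSpace Z] {n : ℕ}

lemma measurable_comp_perm (π : Equiv.Perm (Fin (n+1))) :
    Measurable (fun (z : Fin (n+1) → Z) i => z (π i)) := by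
  fun_prop

lemma IsExchangeable.lintegral_comp_perm {μ : Measure (Fin (n+1) → Z)} (hμ : IsExchangeable n μ)
    {E : (Fin (n+1) → Z) → ℝ≥0∞} (hE : Measurable E) (π : Equiv.Perm (Fin (n+1))) :
    ∫⁻ z, E (fun i => z (π i)) ∂μ = ∫⁻ z, E z ∂μ := by
  conv_rhs => rw [← hμ π]
  rw [lintegral_map hE (measurable_comp_perm π)]

lemma IsExchangeable.lintegral_Ei {μ : Measure (Fin (n+1) → Z)} (hμ : IsExchangeable n μ)
    {E : (Fin (n+1) → Z) → ℝ≥0∞} (hE : Measurable E) :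
    ∫⁻ z, Ei n E z ∂μ = ∫⁻ z, E z ∂μ := by
  have hN : (Nat.factorial (n+1) : ℝ≥0∞) ≠ 0 := by exact_mod_cast Nat.factorial_ne_zero _
  simp only [Ei, ENNReal.div_eq_inv_mul]
  rw [lintegral_const_mul' _ _ (ENNReal.inv_ne_top.2 hN),
    lintegral_finsetSum _ fun π _ => by fun_prop]
  simp only [hμ.lintegral_comp_perm hE, Finset.sum_const, Finset.card_univ, Fintype.card_perm,
    Fintype.card_fin, nsmul_eq_mul, ← mul_assoc]
  rw [ENNReal.inv_mul_cancel hN (ENNReal.natCast_ne_top _), one_mul]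

def permOrbitMeasure (z : Fin (n+1) → Z) : Measure (Fin (n+1) → Z) :=
  (Nat.factorial (n+1) : ℝ≥0∞)⁻¹ • ∑ π : Equiv.Perm (Fin (n+1)), Measure.dirac (fun i => z (π i))

lemma lintegral_permOrbitMeasure {E : (Fin (n+1) → Z) → ℝ≥0∞} (hE : Measurable E)
    (z : Fin (n+1) → Z) : ∫⁻ w, E w ∂permOrbitMeasure z = Ei n E z := by
  rw [permOrbitMeasure, lintegral_smul_measure, lintegral_finsetSum_measure, Ei,
    ENNReal.div_eq_inv_mul]
  simp only [lintegral_dirac' _ hE, smul_eq_mul]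

instance (z : Fin (n+1) → Z) : IsProbabilityMeasure (permOrbitMeasure z) := by
  constructor
  rw [← setLIntegral_one, Measure.restrict_univ, lintegral_permOrbitMeasure measurable_const, Ei]
  simp only [Finset.sum_const, Finset.card_univ, Fintype.card_perm, Fintype.card_fin,
    nsmul_eq_mul, mul_one]
  exact ENNReal.div_self (by exact_mod_cast Nat.factorial_ne_zero _) (ENNReal.natCast_ne_top _)

lemma isExchangeable_permOrbitMeasure (z : Fin (n+1) → Z) :
    IsExchangeable n (permOrbitMeasure z) := by
  intro σ
  rw [permOrbitMeasure, Measure.map_smul,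
    Measure.map_finset_sum (measurable_comp_perm σ).aemeasurable]
  simp only [Measure.map_dirac' (measurable_comp_perm σ)]
  congr 1
  exact Equiv.sum_comp (Equiv.mulRight σ) fun π => Measure.dirac fun i => z (π i)

end Exchangeability

theorem stmt9_general {Z : Type*} [MeasurableSpace Z] (n : ℕ)
    (E : (Fin (n+1) → Z) → ℝ≥0∞) (hE : Measurable E) :
    IsExchE n E ↔ ∀ z : Fin (n+1) → Z,
      (∑ π : Equiv.Perm (Fin (n+1)), E (fun i => z (π i))) / (Nat.factorial (n+1) : ℝ≥0∞) ≤ 1 := by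
  constructor
  · rintro ⟨-, hexch⟩ z
    rw [← Ei, ← lintegral_permOrbitMeasure hE]
    exact hexch _ inferInstance (isExchangeable_permOrbitMeasure z)
  · refine fun h => ⟨hE, fun μ _ hμ => ?_⟩
    calc ∫⁻ z, E z ∂μ = ∫⁻ z, Ei n E z ∂μ := (IsExchangeable.lintegral_Ei hμ hE).symm
      _ ≤ ∫⁻ _, 1 ∂μ := lintegral_mono h
      _ = 1 := by simp

/-- A measurable `E : Z^{n+1} → [0,∞]` is an exchangeability e-variable if and only if
`(1/(n+1)!) Σ_π E(z_{π(1)},…,z_{π(n+1)}) ≤ 1` for every data sequence. -/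
theorem stmt9 {Z : Type*} [MeasurableSpace Z] (n : ℕ) (hn : 1 ≤ n)
    (E : (Fin (n+1) → Z) → ℝ≥0∞) (hE : Measurable E) :
    IsExchE n E ↔ ∀ z : Fin (n+1) → Z,
      (∑ π : Equiv.Perm (Fin (n+1)), E (fun i => z (π i))) / (Nat.factorial (n+1) : ℝ≥0∞) ≤ 1 :=
  stmt9_general n E hE

end
end

section
/- For every measurable E : Z^{n+1} → [0,∞], the function E^t is train-invariant; moreover, if E is an exchangeability e-variable then E^t is an exchangeability e-variable (hence a conformal e-predictor), and if E is a randomness e-variable then E^t is a randomness e-variable. -/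
open MeasureTheory ProbabilityTheory
open scoped ENNReal NNReal

noncomputable section

/-!
Permuting the training examples is the action of the subgroup of permutations of `Fin (n+1)`
fixing the last point. `E^t` averages `E` over that subgroup, so it is invariant under it, and
since every exchangeable law, and in particular every IID law `Q^{n+1}`, is invariant under each
of these permutations, averaging does not change the expectation of `E`.
-/

theorem lintegral_sum_comp_div_card {α ι : Type*} [MeasurableSpace α] [Fintype ι] [Nonempty ι]
    {μ : Measure α} {φ : ι → α → α} (hφ : ∀ i, MeasurePreserving (φ i) μ μ)
    {f : α → ℝ≥0∞} (hf : Measurable f) :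
    ∫⁻ x, (∑ i, f (φ i x)) / Fintype.card ι ∂μ = ∫⁻ x, f x ∂μ := by
  have hcard : (Fintype.card ι : ℝ≥0∞) ≠ 0 := by simp
  simp_rw [ENNReal.div_eq_inv_mul]
  rw [lintegral_const_mul' _ _ (ENNReal.inv_ne_top.2 hcard),
    lintegral_finsetSum (f := fun i x => f (φ i x)) _ fun i _ => hf.comp (hφ i).measurable]
  simp_rw [(hφ _).lintegral_comp hf, Finset.sum_const, Finset.card_univ, nsmul_eq_mul]
  exact ENNReal.inv_mul_cancel_left hcard (by simp)

theorem measurePreserving_comp_perm_pi {ι Z : Type*} [Fintype ι] [MeasurableSpace Z]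
    (Q : Measure Z) [SigmaFinite Q] (π : Equiv.Perm ι) :
    MeasurePreserving (fun (z : ι → Z) i => z (π i))
      (Measure.pi fun _ => Q) (Measure.pi fun _ => Q) :=
  measurePreserving_arrowCongr' (fun _ => Q) (fun _ => Q) π.symm (MeasurableEquiv.refl Z)
    fun _ => MeasurePreserving.id Q

theorem IsExchangeable.measurePreserving {Z : Type*} [MeasurableSpace Z] {n : ℕ}
    {R : Measure (Fin (n+1) → Z)} (hR : IsExchangeable n R) (π : Equiv.Perm (Fin (n+1))) :
    MeasurePreserving (fun z i => z (π i)) R R :=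
  ⟨measurable_pi_lambda _ fun i => measurable_pi_apply (π i), hR π⟩

def castSuccPerm (n : ℕ) (σ : Equiv.Perm (Fin n)) : Equiv.Perm (Fin (n+1)) :=
  Equiv.permCongr finSuccEquivLast.symm σ.optionCongr

@[simp]
theorem castSuccPerm_castSucc (n : ℕ) (σ : Equiv.Perm (Fin n)) (i : Fin n) :
    castSuccPerm n σ i.castSucc = (σ i).castSucc := by
  simp [castSuccPerm, Equiv.permCongr_apply]

@[simp]
theorem castSuccPerm_last (n : ℕ) (σ : Equiv.Perm (Fin n)) :
    castSuccPerm n σ (Fin.last n) = Fin.last n := by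
  simp [castSuccPerm, Equiv.permCongr_apply]

theorem castSuccPerm_mul (n : ℕ) (τ σ : Equiv.Perm (Fin n)) :
    castSuccPerm n (τ * σ) = castSuccPerm n τ * castSuccPerm n σ := by
  ext j
  induction j using Fin.lastCases <;> simp

theorem snoc_perm_eq_comp_castSuccPerm {Z : Type*} (n : ℕ) (z : Fin (n+1) → Z)
    (σ : Equiv.Perm (Fin n)) :
    (Fin.snoc (fun i => z (σ i).castSucc) (z (Fin.last n)) : Fin (n+1) → Z) =
      fun j => z (castSuccPerm n σ j) := by
  funext j
  induction j using Fin.lastCases <;> simp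

section TrainingAverage

variable {Z : Type*} {n : ℕ} (E : (Fin (n+1) → Z) → ℝ≥0∞)

theorem Et_eq_sum_div_card :
    Et n E = fun z => (∑ σ : Equiv.Perm (Fin n), E fun j => z (castSuccPerm n σ j)) /
      Fintype.card (Equiv.Perm (Fin n)) := by
  funext z
  simp only [Et, snoc_perm_eq_comp_castSuccPerm, Fintype.card_perm, Fintype.card_fin]

theorem trainInv_Et : TrainInv n (Et n E) := by
  intro z τ
  rw [snoc_perm_eq_comp_castSuccPerm, Et_eq_sum_div_card]
  dsimp only
  congr 1
  refine Fintype.sum_equiv (Equiv.mulLeft τ) _ _ fun σ => ?_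
  simp [castSuccPerm_mul]

variable [MeasurableSpace Z] {E}

theorem measurable_Et (hE : Measurable E) : Measurable (Et n E) := by
  rw [Et_eq_sum_div_card]
  exact (Finset.measurable_sum Finset.univ fun σ _ =>
    hE.comp (measurable_pi_lambda _ fun j => measurable_pi_apply _)).div_const _

theorem lintegral_Et {R : Measure (Fin (n+1) → Z)} (hE : Measurable E)
    (hR : ∀ σ, MeasurePreserving (fun z j => z (castSuccPerm n σ j)) R R) :
    ∫⁻ z, Et n E z ∂(R) = ∫⁻ z, E z ∂(R) := by
  rw [Et_eq_sum_div_card]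
  exact lintegral_sum_comp_div_card hR hE

end TrainingAverage

theorem stmt12_general {Z : Type*} [MeasurableSpace Z] (n : ℕ)
    (E : (Fin (n+1) → Z) → ℝ≥0∞) :
    TrainInv n (Et n E) ∧
      (IsExchE n E → IsExchE n (Et n E)) ∧
      (IsRandE n E → IsRandE n (Et n E)) := by
  refine ⟨trainInv_Et E, ?_, ?_⟩
  · rintro ⟨hE, hR⟩
    refine ⟨measurable_Et hE, fun R hRprob hRexch => ?_⟩
    rw [lintegral_Et hE fun σ => hRexch.measurePreserving _]
    exact hR R hRprob hRexch
  · rintro ⟨hE, hQ⟩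
    refine ⟨measurable_Et hE, fun Q hQprob => ?_⟩
    rw [lintegral_Et hE fun σ => measurePreserving_comp_perm_pi Q _]
    exact hQ Q hQprob

/-- `E^t` is always train-invariant; it is an exchangeability e-variable (hence a conformal
e-predictor) whenever `E` is, and a randomness e-variable whenever `E` is. -/
theorem stmt12 {Z : Type*} [MeasurableSpace Z] (n : ℕ) (hn : 1 ≤ n)
    (E : (Fin (n+1) → Z) → ℝ≥0∞) (hE : Measurable E) :
    TrainInv n (Et n E) ∧
      (IsExchE n E → IsExchE n (Et n E)) ∧
      (IsRandE n E → IsRandE n (Et n E)) :=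
  stmt12_general n E
end
end

section
/- For each constant c ∈ (0,1) and each integer m ≥ 2 there exists N such that for every n ≥ N the following function E : Y^{n+1} → [0,∞), where Y = {0,1,…,m−1}, is a randomness e-variable: E(y_1,…,y_{n+1}) := c·m if both (i) y_1 + ⋯ + y_{n+1} ≡ 0 (mod m) and (ii) for every y ∈ Y the count k_y := |{i ∈ {1,…,n+1} : y_i = y}| satisfies |k_y − n/m| ≤ 0.1·n/m; and E(y_1,…,y_{n+1}) := 0 otherwise. That is, ∫ E dQ^{n+1} ≤ 1 for every probability measure Q on Y. -/
open MeasureTheory ProbabilityTheory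
open scoped ENNReal NNReal

noncomputable section

/-! Let `q` be the law of one label. If `q a ≥ 1/(2m)` for every `a`, the label sum of `n + 1`
independent draws is nearly uniform modulo `m`: its law exceeds `1/m` by at most `2^{-(n+1)}`, so
the integral is at most `c + c·m·2^{-(n+1)} ≤ 1` for large `n`. Otherwise some `q a < 1/(2m)`, and
a balanced sample must contain label `a` at least about `0.4 n/m` more times than its mean; by
Chebyshev's inequality this has probability `O(m/n)`, so the integral is `O(m²/n)`. -/

open Finset

section ProductWeights

variable {α : Type*} [Fintype α]

theorem Fintype.sum_fin_succ_pi {β : Type*} [AddCommMonoid β] {k : ℕ}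
    (F : (Fin (k + 1) → α) → β) :
    ∑ y, F y = ∑ a, ∑ y : Fin k → α, F (Fin.cons a y) := by
  rw [← (Fin.consEquiv fun _ => α).sum_comp, Fintype.sum_prod_type]
  rfl

theorem sum_prod_mul_fin_succ (q : α → ℝ) {k : ℕ} (F : (Fin (k + 1) → α) → ℝ) :
    ∑ y, (∏ i, q (y i)) * F y =
      ∑ a, q a * ∑ y : Fin k → α, (∏ i, q (y i)) * F (Fin.cons a y) := by
  simp only [Fintype.sum_fin_succ_pi, Fin.prod_univ_succ, Fin.cons_zero, Fin.cons_succ, mul_sum,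
    mul_assoc]

theorem sum_prod_eq_one {q : α → ℝ} (hq : ∑ a, q a = 1) (k : ℕ) :
    ∑ y : Fin k → α, ∏ i, q (y i) = 1 := by
  rw [← Fintype.sum_pow, hq, one_pow]

theorem sum_prod_mul_sum_apply {q : α → ℝ} (hq : ∑ a, q a = 1) (g : α → ℝ) (k : ℕ) :
    ∑ y : Fin k → α, (∏ i, q (y i)) * ∑ i, g (y i) = k * ∑ a, q a * g a := by
  induction k with
  | zero => simp
  | succ k ih =>
    have h_cons (a : α) :
        ∑ y : Fin k → α, (∏ i, q (y i)) * ∑ i, g ((Fin.cons a y : Fin (k + 1) → α) i) =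
          g a + k * ∑ a, q a * g a := by
      simp only [Fin.sum_univ_succ, Fin.cons_zero, Fin.cons_succ, mul_add, sum_add_distrib,
        ← sum_mul, sum_prod_eq_one hq, ih, one_mul]
    simp only [sum_prod_mul_fin_succ, h_cons, mul_add, sum_add_distrib, ← sum_mul, hq]
    push_cast
    ring

theorem sum_prod_mul_sum_apply_sq {q : α → ℝ} (hq : ∑ a, q a = 1) {g : α → ℝ}
    (hg : ∑ a, q a * g a = 0) (k : ℕ) :
    ∑ y : Fin k → α, (∏ i, q (y i)) * (∑ i, g (y i)) ^ 2 = k * ∑ a, q a * g a ^ 2 := by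
  induction k with
  | zero => simp
  | succ k ih =>
    have h_cons (a : α) :
        ∑ y : Fin k → α, (∏ i, q (y i)) * (∑ i, g ((Fin.cons a y : Fin (k + 1) → α) i)) ^ 2 =
          g a ^ 2 + k * ∑ a, q a * g a ^ 2 := by
      simp only [Fin.sum_univ_succ, Fin.cons_zero, Fin.cons_succ, add_sq, mul_add,
        sum_add_distrib, ← sum_mul, sum_prod_eq_one hq, ih, one_mul, mul_left_comm _ (2 * g a)]
      rw [← mul_sum, sum_prod_mul_sum_apply hq, hg]
      ring
    simp only [sum_prod_mul_fin_succ, h_cons, mul_add, sum_add_distrib, ← sum_mul, hq]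
    push_cast
    ring

theorem sum_prod_filter_le_card_filter_le [DecidableEq α] {q : α → ℝ} (hq0 : ∀ a, 0 ≤ q a)
    (hq : ∑ a, q a = 1) (a : α) {k : ℕ} {K : ℝ} (hK : k * q a < K) :
    ∑ y ∈ univ.filter (fun y : Fin k → α => K ≤ ((univ.filter fun i => y i = a).card : ℝ)),
        ∏ i, q (y i) ≤ k * q a * (1 - q a) / (K - k * q a) ^ 2 := by
  set g : α → ℝ := fun b => (if b = a then 1 else 0) - q a with hg
  have hg_mean : ∑ b, q b * g b = 0 := by
    simp [hg, mul_sub, sum_sub_distrib, ← sum_mul, hq]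
  have hg_var : ∑ b, q b * g b ^ 2 = q a * (1 - q a) := by
    have (b : α) :
        q b * g b ^ 2 = (if b = a then q b else 0) * (1 - 2 * q a) + q b * q a ^ 2 := by
      split_ifs with hb
      · simp only [hg, hb, if_true]; ring
      · simp only [hg, hb, if_false]; ring
    simp only [this, sum_add_distrib, ← sum_mul, sum_ite_eq', mem_univ, if_true, hq]
    ring
  have h_count (y : Fin k → α) :
      ((univ.filter fun i => y i = a).card : ℝ) - k * q a = ∑ i, g (y i) := by
    simp [hg, sum_sub_distrib, sum_boole]
  have hW (y : Fin k → α) : 0 ≤ ∏ i, q (y i) := prod_nonneg fun i _ => hq0 (y i)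
  rw [le_div_iff₀ (by nlinarith), sum_mul]
  calc ∑ y ∈ univ.filter (fun y : Fin k → α => K ≤ ((univ.filter fun i => y i = a).card : ℝ)),
        (∏ i, q (y i)) * (K - k * q a) ^ 2
      ≤ ∑ y ∈ univ.filter (fun y : Fin k → α => K ≤ ((univ.filter fun i => y i = a).card : ℝ)),
        (∏ i, q (y i)) * (∑ i, g (y i)) ^ 2 := by
        refine sum_le_sum fun y hy => mul_le_mul_of_nonneg_left ?_ (hW y)
        rw [← h_count]
        have := (mem_filter.mp hy).2
        nlinarith
    _ ≤ ∑ y : Fin k → α, (∏ i, q (y i)) * (∑ i, g (y i)) ^ 2 :=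
        sum_le_sum_of_subset_of_nonneg (filter_subset _ _) fun y _ _ =>
          mul_nonneg (hW y) (sq_nonneg _)
    _ = k * q a * (1 - q a) := by
        rw [sum_prod_mul_sum_apply_sq hq hg_mean, hg_var, mul_assoc]

end ProductWeights

/-- Split `q = ℓ + (q - ℓ)`: convolving any law with the constant `ℓ` gives the constant `ℓ`, so
the excess of the law of the sum over `1 / |G|` shrinks by the factor `1 - |G| ℓ` with each draw. -/
theorem sum_prod_filter_sum_eq_le {G : Type*} [AddCommGroup G] [Fintype G] [DecidableEq G]
    {q : G → ℝ} (hq : ∑ a, q a = 1) {ℓ : ℝ} (hℓ : ∀ a, ℓ ≤ q a) (k : ℕ) (g : G) :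
    ∑ y ∈ univ.filter (fun y : Fin k → G => ∑ i, y i = g), ∏ i, q (y i) ≤
      1 / Fintype.card G + (1 - Fintype.card G * ℓ) ^ k := by
  induction k generalizing g with
  | zero =>
    calc _ ≤ (1 : ℝ) := by
          rw [sum_filter]
          simp only [univ_unique, sum_singleton, univ_eq_empty, prod_empty]
          split_ifs <;> norm_num
      _ ≤ _ := by simp
  | succ k ih =>
    set B : ℝ := 1 / Fintype.card G + (1 - Fintype.card G * ℓ) ^ k with hB
    set p : G → ℝ := fun g =>
      ∑ y ∈ univ.filter (fun y : Fin k → G => ∑ i, y i = g), ∏ i, q (y i) with hp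
    have h_rec : ∑ y ∈ univ.filter (fun y : Fin (k + 1) → G => ∑ i, y i = g), ∏ i, q (y i) =
        ∑ a, q a * p (g - a) := by
      simp only [hp, sum_filter, mul_sum, mul_ite, mul_zero, Fintype.sum_fin_succ_pi,
        Fin.sum_cons, Fin.prod_univ_succ, Fin.cons_zero, Fin.cons_succ, eq_sub_iff_add_eq']
    have h_total : ∑ a, p (g - a) = 1 := by
      rw [show ∑ a, p (g - a) = ∑ b, p b from (Equiv.subLeft g).sum_comp p, hp, sum_fiberwise,
        sum_prod_eq_one hq]
    calc _ = ∑ a, (q a - ℓ) * p (g - a) + ℓ * ∑ a, p (g - a) := by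
          rw [h_rec, mul_sum, ← sum_add_distrib]
          exact sum_congr rfl fun a _ => by ring
      _ ≤ ∑ a, (q a - ℓ) * B + ℓ := by
          rw [h_total, mul_one]
          gcongr with a
          · linarith [hℓ a]
          · exact ih _
      _ = _ := by
          rw [← sum_mul, sum_sub_distrib, hq, sum_const, card_univ, nsmul_eq_mul, hB]
          field_simp
          ring

theorem Fin.val_sum_eq_sum_val_mod {m : ℕ} [NeZero m] {ι : Type*} [DecidableEq ι]
    (s : Finset ι) (y : ι → Fin m) : (∑ i ∈ s, y i).val = (∑ i ∈ s, (y i).val) % m := by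
  induction s using Finset.induction_on with
  | empty => simp
  | insert a s ha ih => rw [sum_insert ha, sum_insert ha, Fin.val_add, ih, Nat.add_mod_mod]

theorem sum_prod_filter_sum_val_mod_eq_zero_le {m k : ℕ} [NeZero m] {q : Fin m → ℝ}
    (hq : ∑ a, q a = 1) (hq_lower : ∀ a, 1 / (2 * m) ≤ q a) :
    ∑ y ∈ univ.filter (fun y : Fin k → Fin m => (∑ i, (y i).val) % m = 0), ∏ i, q (y i) ≤
      1 / m + (1 / 2) ^ k := by
  have h_filter : univ.filter (fun y : Fin k → Fin m => (∑ i, (y i).val) % m = 0) =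
      univ.filter (fun y : Fin k → Fin m => ∑ i, y i = 0) := by
    ext y
    simp [Fin.ext_iff, Fin.val_sum_eq_sum_val_mod]
  have hm : (m : ℝ) ≠ 0 := Nat.cast_ne_zero.mpr (NeZero.ne m)
  have h_contraction : 1 - (m : ℝ) * (1 / (2 * m)) = 1 / 2 := by
    field_simp
    norm_num
  have h_mixing := sum_prod_filter_sum_eq_le hq hq_lower k 0
  rwa [Fintype.card_fin, h_contraction, ← h_filter] at h_mixing

theorem mul_sum_prod_filter_card_le_le_one {m n : ℕ} (hn : 12 * m ^ 2 ≤ n) {q : Fin m → ℝ}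
    (hq0 : ∀ a, 0 ≤ q a) (hq : ∑ a, q a = 1) {a : Fin m} (ha : q a < 1 / (2 * m)) :
    m * ∑ y ∈ univ.filter (fun y : Fin (n + 1) → Fin m =>
        0.9 * n / m ≤ ((univ.filter fun i => y i = a).card : ℝ)), ∏ i, q (y i) ≤ 1 := by
  have hm : (1 : ℝ) ≤ m := by exact_mod_cast a.pos
  have hn : (12 : ℝ) * m ^ 2 ≤ n := by exact_mod_cast hn
  have hn_pos : (0 : ℝ) < n := by nlinarith
  have h_mean : ((n + 1 : ℕ) : ℝ) * q a ≤ (n + 1) / (2 * m) := by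
    push_cast
    rw [le_div_iff₀ (by positivity)]
    nlinarith [(lt_div_iff₀ (by positivity)).mp ha]
  have h_gap : 0.3 * n / m ≤ 0.9 * n / m - ((n + 1 : ℕ) : ℝ) * q a := by
    have : (0.3 : ℝ) * n / m + (n + 1) / (2 * m) ≤ 0.9 * n / m := by
      field_simp
      nlinarith
    linarith
  have h_var : ((n + 1 : ℕ) : ℝ) * q a * (1 - q a) ≤ n / m := by
    have : ((n : ℝ) + 1) / (2 * m) ≤ n / m := by
      field_simp
      nlinarith
    calc ((n + 1 : ℕ) : ℝ) * q a * (1 - q a) ≤ ((n + 1 : ℕ) : ℝ) * q a :=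
          mul_le_of_le_one_right (mul_nonneg (by positivity) (hq0 a)) (by linarith [hq0 a])
      _ ≤ n / m := h_mean.trans this
  have h_chebyshev := sum_prod_filter_le_card_filter_le hq0 hq a
    (sub_pos.mp (lt_of_lt_of_le (by positivity) h_gap))
  calc _ ≤ m * (((n + 1 : ℕ) : ℝ) * q a * (1 - q a) /
        (0.9 * n / m - ((n + 1 : ℕ) : ℝ) * q a) ^ 2) := by gcongr
    _ ≤ m * ((n / m) / (0.3 * n / m) ^ 2) := by gcongr
    _ = 100 * m ^ 2 / (9 * n) := by field_simp; ring
    _ ≤ 1 := by rw [div_le_one (by positivity)]; linarith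

theorem mul_sum_prod_filter_le_one {c : ℝ} (hc : 0 ≤ c) {m n : ℕ} [NeZero m]
    (hn_geom : (m : ℝ) * (1 / 2) ^ (n + 1) ≤ 1 - c) (hn : 12 * m ^ 2 ≤ n)
    {q : Fin m → ℝ} (hq0 : ∀ a, 0 ≤ q a) (hq : ∑ a, q a = 1)
    (P : (Fin (n + 1) → Fin m) → Prop) [DecidablePred P]
    (hP : ∀ y, P y → (∑ i, (y i).val) % m = 0 ∧
      ∀ l, 0.9 * n / m ≤ ((univ.filter fun i => y i = l).card : ℝ)) :
    c * m * ∑ y ∈ univ.filter P, ∏ i, q (y i) ≤ 1 := by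
  have hW (y : Fin (n + 1) → Fin m) : 0 ≤ ∏ i, q (y i) := prod_nonneg fun i _ => hq0 (y i)
  have h_geom_nonneg : 0 ≤ (m : ℝ) * (1 / 2) ^ (n + 1) := by positivity
  by_cases h_uniform : ∀ a, 1 / (2 * m) ≤ q a
  · calc c * m * ∑ y ∈ univ.filter P, ∏ i, q (y i)
        ≤ c * m * ∑ y ∈ univ.filter (fun y : Fin (n + 1) → Fin m => (∑ i, (y i).val) % m = 0),
            ∏ i, q (y i) := by
          gcongr
          · exact fun y _ _ => hW y
          · exact fun hy => (hP _ hy).1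
      _ ≤ c * m * (1 / m + (1 / 2) ^ (n + 1)) := by
          gcongr
          exact sum_prod_filter_sum_val_mod_eq_zero_le hq h_uniform
      _ = c + c * (m * (1 / 2) ^ (n + 1)) := by
          field_simp [Nat.cast_ne_zero.mpr (NeZero.ne m)]
      _ ≤ 1 := by nlinarith
  · obtain ⟨a, ha⟩ : ∃ a, q a < 1 / (2 * m) := by simpa using h_uniform
    calc c * m * ∑ y ∈ univ.filter P, ∏ i, q (y i)
        ≤ 1 * m * ∑ y ∈ univ.filter (fun y : Fin (n + 1) → Fin m =>
            0.9 * n / m ≤ ((univ.filter fun i => y i = a).card : ℝ)), ∏ i, q (y i) := by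
          gcongr
          · exact sum_nonneg fun y _ => hW y
          · linarith
          · exact fun y _ _ => hW y
          · exact fun hy => (hP _ hy).2 a
      _ ≤ 1 := by
          rw [one_mul]
          exact mul_sum_prod_filter_card_le_le_one hn hq0 hq ha

theorem lintegral_ite_measure_pi {Z ι : Type*} [Fintype Z] [Fintype ι] [DecidableEq ι]
    [MeasurableSpace Z] [MeasurableSingletonClass Z] (Q : Measure Z) [IsProbabilityMeasure Q]
    (p : (ι → Z) → Prop) [DecidablePred p] {r : ℝ} (hr : 0 ≤ r) :
    ∫⁻ z, (if p z then ENNReal.ofReal r else 0) ∂Measure.pi (fun _ => Q) =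
      ENNReal.ofReal (r * ∑ z ∈ univ.filter p, ∏ i, Q.real {z i}) := by
  have h_singleton (z : ι → Z) :
      Measure.pi (fun _ => Q) {z} = ENNReal.ofReal (∏ i, Q.real {z i}) := by
    rw [Measure.pi_singleton, ENNReal.ofReal_prod_of_nonneg fun _ _ => measureReal_nonneg]
    exact prod_congr rfl fun i _ => (ofReal_measureReal).symm
  simp only [lintegral_fintype, ite_mul, zero_mul, ← sum_filter, h_singleton,
    ← ENNReal.ofReal_mul hr]
  rw [← ENNReal.ofReal_sum_of_nonneg fun z _ => by positivity, mul_sum]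

/-- For `c ∈ (0,1)` and `m ≥ 2`, for all sufficiently large `n` the function taking value
`c·m` on sequences whose label sum is divisible by `m` and whose label counts are all within
`10%` of `n/m`, and `0` otherwise, is a randomness e-variable on `{0,…,m−1}^{n+1}`. -/
theorem stmt18 (c : ℝ) (hc : c ∈ Set.Ioo (0:ℝ) 1) (m : ℕ) (hm : 2 ≤ m) :
    ∃ N : ℕ, ∀ n : ℕ, N ≤ n →
      IsRandE n (fun y : Fin (n+1) → Fin m =>
        if (∑ i, (y i).val) % m = 0 ∧
            (∀ l : Fin m,
              |((Finset.univ.filter fun i => y i = l).card : ℝ) - (n : ℝ) / (m : ℝ)|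
                ≤ 0.1 * (n : ℝ) / (m : ℝ))
        then ENNReal.ofReal (c * (m : ℝ)) else 0) := by
  have : NeZero m := ⟨by omega⟩
  have h_geom :
      Filter.Tendsto (fun n : ℕ => (m : ℝ) * (1 / 2) ^ (n + 1)) Filter.atTop (nhds 0) := by
    have := (tendsto_pow_atTop_nhds_zero_of_lt_one (r := (1 / 2 : ℝ)) (by norm_num)
      (by norm_num)).const_mul (m : ℝ)
    rw [mul_zero] at this
    exact (Filter.tendsto_add_atTop_iff_nat 1).mpr this
  obtain ⟨N, hN⟩ := Filter.eventually_atTop.mp <|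
    (h_geom.eventually (ge_mem_nhds (sub_pos.mpr hc.2))).and
      (Filter.eventually_ge_atTop (12 * m ^ 2))
  refine ⟨N, fun n hn => ⟨measurable_of_finite _, fun Q _ => ?_⟩⟩
  rw [lintegral_ite_measure_pi Q _ (by positivity [hc.1]), ENNReal.ofReal_le_one]
  have hQ : ∑ a, Q.real {a} = 1 := by rw [sum_measureReal_singleton, coe_univ, probReal_univ]
  refine mul_sum_prod_filter_le_one hc.1.le (hN n hn).1 (hN n hn).2
    (fun _ => measureReal_nonneg) hQ _ fun y hy => ⟨hy.1, fun l => ?_⟩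
  have := (abs_le.mp (hy.2 l)).1
  linarith [show 0.9 * (n : ℝ) / m = n / m - 0.1 * n / m by ring]

end
end
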